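/- arXiv:1302.5549 — 2 statements merged into one kernel-verified Lean document; each statement's English description precedes it below -/
import Mathlib

section
/- Let G1 = (V1, E1) and G2 = (V2, E2) be well-formed graphs over the same node type, and let S be a finite set of operations such that: (i) no two distinct operations of S act on the same node or on the same edge (for each node v, S contains at most one of addNode(v), remNode(v), and not both; for each unordered pair {v,w}, S contains at most one of addEdge(v,w), remEdge(v,w), and not both); (ii) every addNode(v) ∈ S has v ∉ V1, every remNode(v) ∈ S has v ∈ V1, every addEdge(v,w) ∈ S has {v,w} ∉ E1, and every remEdge(v,w) ∈ S has {v,w} ∈ E1; (iii) applying S to G1 (in the order: all remEdge operations, then all remNode operations, then all addNode operations, then all addEdge operations) yields G2; and (iv) no proper subset of S applied to G1 in that order yields G2. Then S = Δ(G1, G2); that is, Δ(G1, G2) is the unique such minimal set of operations deriving G2 from G1. -/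
/-- A graph over a node type `α`: a set of nodes and a set of edges
(unordered pairs of nodes). -/
structure PlainGraph (α : Type*) where
  V : Set α
  E : Set (Sym2 α)

/-- A graph is well-formed if its edges are pairs of *distinct* nodes and
both endpoints of every edge belong to the node set. -/
def PlainGraph.WellFormed {α : Type*} (G : PlainGraph α) : Prop :=
  (∀ e ∈ G.E, ¬ e.IsDiag) ∧ ∀ e ∈ G.E, ∀ v ∈ e, v ∈ G.V

/-- Update operations on graphs. -/
inductive Op (α : Type*) where
  | addNode (v : α)
  | remNode (v : α)
  | addEdge (e : Sym2 α)
  | remEdge (e : Sym2 α)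

/-- The delta Δ(G1, G2). -/
def delta {α : Type*} (G1 G2 : PlainGraph α) : Set (Op α) :=
  (Op.addNode '' (G2.V \ G1.V)) ∪ (Op.remNode '' (G1.V \ G2.V)) ∪
  (Op.addEdge '' (G2.E \ G1.E)) ∪
  (Op.remEdge '' {e | e ∈ G1.E \ G2.E ∧ ∀ v ∈ e, v ∈ G2.V})

/-- The result of applying a set `S` of operations to a graph `G` in the order:
first all `remEdge` operations, then all `remNode` operations
(each of which removes the node and its incident edges),
then all `addNode` operations, then all `addEdge` operations. -/
def applyDelta {α : Type*} (S : Set (Op α)) (G : PlainGraph α) : PlainGraph α :=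
  ⟨(G.V \ {v | Op.remNode v ∈ S}) ∪ {v | Op.addNode v ∈ S},
   {e ∈ G.E | Op.remEdge e ∉ S ∧ ∀ v ∈ e, Op.remNode v ∉ S} ∪ {e | Op.addEdge e ∈ S}⟩

/-!
Conditions (i) and (ii) make every operation of `S` visible in the difference between `G1` and
the result of applying `S`, so `S` agrees with Δ on additions, on node removals, and on edge
removals whose endpoints survive. The only possible discrepancy is a `remEdge e` together with
the removal of an endpoint of `e`; that edge removal is redundant, since removing the node
already deletes `e`, so minimality rules it out.
-/

namespace PlainGraph

variable {α : Type*}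

section delta

variable (G1 G2 : PlainGraph α)

@[simp] theorem addNode_mem_delta {v : α} :
    Op.addNode v ∈ delta G1 G2 ↔ v ∈ G2.V ∧ v ∉ G1.V := by
  simp [delta]

@[simp] theorem remNode_mem_delta {v : α} :
    Op.remNode v ∈ delta G1 G2 ↔ v ∈ G1.V ∧ v ∉ G2.V := by
  simp [delta]

@[simp] theorem addEdge_mem_delta {e : Sym2 α} :
    Op.addEdge e ∈ delta G1 G2 ↔ e ∈ G2.E ∧ e ∉ G1.E := by
  simp [delta]

@[simp] theorem remEdge_mem_delta {e : Sym2 α} :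
    Op.remEdge e ∈ delta G1 G2 ↔ (e ∈ G1.E ∧ e ∉ G2.E) ∧ ∀ v ∈ e, v ∈ G2.V := by
  simp [delta]

end delta

section applyDelta

variable {S : Set (Op α)} {G : PlainGraph α}

theorem mem_applyDelta_V {v : α} :
    v ∈ (applyDelta S G).V ↔ (v ∈ G.V ∧ Op.remNode v ∉ S) ∨ Op.addNode v ∈ S :=
  Iff.rfl

theorem mem_applyDelta_E {e : Sym2 α} :
    e ∈ (applyDelta S G).E ↔
      (e ∈ G.E ∧ Op.remEdge e ∉ S ∧ ∀ v ∈ e, Op.remNode v ∉ S) ∨ Op.addEdge e ∈ S :=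
  Iff.rfl

theorem applyDelta_diff_remEdge {e : Sym2 α} {v : α} (hv : v ∈ e) (hvS : Op.remNode v ∈ S) :
    applyDelta (S \ {Op.remEdge e}) G = applyDelta S G := by
  simp only [applyDelta, mk.injEq, Set.mem_sdiff, Set.mem_singleton_iff, reduceCtorEq,
    not_false_eq_true, and_true, true_and]
  refine Set.ext fun f => or_congr_left (and_congr_right fun _ => ?_)
  by_cases hfe : f = e
  · subst hfe
    exact iff_of_false (fun h => h.2 v hv hvS) (fun h => h.2 v hv hvS)
  · simp [hfe]

theorem remNode_notMem_of_minimal (hmin : ∀ S' ⊂ S, applyDelta S' G ≠ applyDelta S G)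
    {e : Sym2 α} (he : Op.remEdge e ∈ S) {v : α} (hv : v ∈ e) : Op.remNode v ∉ S :=
  fun hvS => hmin _ (Set.sdiff_singleton_ssubset.mpr he) (applyDelta_diff_remEdge hv hvS)

theorem addNode_mem_delta_applyDelta {v : α} (haddN : Op.addNode v ∈ S → v ∉ G.V) :
    Op.addNode v ∈ delta G (applyDelta S G) ↔ Op.addNode v ∈ S := by
  rw [addNode_mem_delta, mem_applyDelta_V]
  constructor
  · rintro ⟨⟨hvG, -⟩ | hvS, hvG'⟩
    · exact absurd hvG hvG'
    · exact hvS
  · exact fun hvS => ⟨Or.inr hvS, haddN hvS⟩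

theorem remNode_mem_delta_applyDelta {v : α} (hremN : Op.remNode v ∈ S → v ∈ G.V)
    (hnode : ¬ (Op.addNode v ∈ S ∧ Op.remNode v ∈ S)) :
    Op.remNode v ∈ delta G (applyDelta S G) ↔ Op.remNode v ∈ S := by
  rw [remNode_mem_delta, mem_applyDelta_V]
  constructor
  · rintro ⟨hvG, hvG'⟩
    by_contra hvS
    exact hvG' (Or.inl ⟨hvG, hvS⟩)
  · intro hvS
    refine ⟨hremN hvS, ?_⟩
    rintro (⟨-, hvS'⟩ | hadd)
    · exact hvS' hvS
    · exact hnode ⟨hadd, hvS⟩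

theorem addEdge_mem_delta_applyDelta {e : Sym2 α} (haddE : Op.addEdge e ∈ S → e ∉ G.E) :
    Op.addEdge e ∈ delta G (applyDelta S G) ↔ Op.addEdge e ∈ S := by
  rw [addEdge_mem_delta, mem_applyDelta_E]
  constructor
  · rintro ⟨⟨heG, -⟩ | heS, heG'⟩
    · exact absurd heG heG'
    · exact heS
  · exact fun heS => ⟨Or.inr heS, haddE heS⟩

theorem remEdge_mem_delta_applyDelta (hG : G.WellFormed) {e : Sym2 α}
    (hremE : Op.remEdge e ∈ S → e ∈ G.E)
    (hedge : ¬ (Op.addEdge e ∈ S ∧ Op.remEdge e ∈ S))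
    (hnode : ∀ v ∈ e, ¬ (Op.addNode v ∈ S ∧ Op.remNode v ∈ S))
    (hkeep : Op.remEdge e ∈ S → ∀ v ∈ e, Op.remNode v ∉ S) :
    Op.remEdge e ∈ delta G (applyDelta S G) ↔ Op.remEdge e ∈ S := by
  simp only [remEdge_mem_delta, mem_applyDelta_V, mem_applyDelta_E]
  constructor
  · rintro ⟨⟨heG, heG'⟩, hendsS⟩
    by_contra heS
    refine heG' (Or.inl ⟨heG, heS, fun v hv hvS => ?_⟩)
    rcases hendsS v hv with ⟨-, hvS'⟩ | hadd
    · exact hvS' hvS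
    · exact hnode v hv ⟨hadd, hvS⟩
  · intro heS
    refine ⟨⟨hremE heS, ?_⟩, fun v hv => Or.inl ⟨hG.2 e (hremE heS) v hv, hkeep heS v hv⟩⟩
    rintro (⟨-, heS', -⟩ | hadd)
    · exact heS' heS
    · exact hedge ⟨hadd, heS⟩

end applyDelta

end PlainGraph

theorem delta_unique_general {α : Type*} (G1 G2 : PlainGraph α)
    (h1 : G1.WellFormed)
    (S : Set (Op α))
    (hnode : ∀ v : α, ¬ (Op.addNode v ∈ S ∧ Op.remNode v ∈ S))
    (hedge : ∀ e : Sym2 α, ¬ (Op.addEdge e ∈ S ∧ Op.remEdge e ∈ S))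
    (haddN : ∀ v : α, Op.addNode v ∈ S → v ∉ G1.V)
    (hremN : ∀ v : α, Op.remNode v ∈ S → v ∈ G1.V)
    (haddE : ∀ e : Sym2 α, Op.addEdge e ∈ S → e ∉ G1.E)
    (hremE : ∀ e : Sym2 α, Op.remEdge e ∈ S → e ∈ G1.E)
    (happ : applyDelta S G1 = G2)
    (hmin : ∀ S' : Set (Op α), S' ⊂ S → applyDelta S' G1 ≠ G2) :
    S = delta G1 G2 := by
  subst happ
  ext op
  symm
  cases op with
  | addNode v => exact PlainGraph.addNode_mem_delta_applyDelta (haddN v)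
  | remNode v => exact PlainGraph.remNode_mem_delta_applyDelta (hremN v) (hnode v)
  | addEdge e => exact PlainGraph.addEdge_mem_delta_applyDelta (haddE e)
  | remEdge e =>
    exact PlainGraph.remEdge_mem_delta_applyDelta h1 (hremE e) (hedge e) (fun v _ => hnode v)
      (fun he _ hv => PlainGraph.remNode_notMem_of_minimal hmin he hv)

/-- Δ(G1, G2) is the *unique* minimal set of operations deriving G2 from G1:
any finite set `S` of operations such that
(i) no two distinct operations of `S` act on the same node or the same edge,
(ii) additions in `S` add elements absent from G1 and removals remove elements present in G1,
(iii) applying `S` to G1 (in the order remEdge / remNode / addNode / addEdge) yields G2, and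
(iv) no proper subset of `S` applied to G1 in that order yields G2,
must equal Δ(G1, G2). -/
theorem delta_unique {α : Type*} (G1 G2 : PlainGraph α)
    (h1 : G1.WellFormed) (h2 : G2.WellFormed)
    (S : Set (Op α)) (hfin : S.Finite)
    (hnode : ∀ v : α, ¬ (Op.addNode v ∈ S ∧ Op.remNode v ∈ S))
    (hedge : ∀ e : Sym2 α, ¬ (Op.addEdge e ∈ S ∧ Op.remEdge e ∈ S))
    (haddN : ∀ v : α, Op.addNode v ∈ S → v ∉ G1.V)
    (hremN : ∀ v : α, Op.remNode v ∈ S → v ∈ G1.V)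
    (haddE : ∀ e : Sym2 α, Op.addEdge e ∈ S → e ∉ G1.E)
    (hremE : ∀ e : Sym2 α, Op.remEdge e ∈ S → e ∈ G1.E)
    (happ : applyDelta S G1 = G2)
    (hmin : ∀ S' : Set (Op α), S' ⊂ S → applyDelta S' G1 ≠ G2) :
    S = delta G1 G2 :=
  delta_unique_general G1 G2 h1 S hnode hedge haddN hremN haddE hremE happ hmin
end

section
/- Partial reconstruction is correct: for every set U of nodes, every graph G, and every finite sequence σ of operations, restricting the graph obtained by applying σ to G to U equals the graph obtained by applying the U-filtered subsequence σ|U to the restriction G|U; that is, (apply σ G)|U = apply (σ|U) (G|U). -/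
/-- A graph over a node type `α`: a set of nodes and a set of edges
(unordered pairs of nodes). -/
structure DynGraph (α : Type*) where
  V : Set α
  E : Set (Sym2 α)

/-- The action of a single operation on a graph. -/
def applyOp {α : Type*} (G : DynGraph α) : Op α → DynGraph α
  | Op.addNode v => ⟨G.V ∪ {v}, G.E⟩
  | Op.remNode v => ⟨G.V \ {v}, {e ∈ G.E | v ∉ e}⟩
  | Op.addEdge e => ⟨G.V, G.E ∪ {e}⟩
  | Op.remEdge e => ⟨G.V, G.E \ {e}⟩

/-- Applying a sequence of operations to a graph, from left to right. -/
def applySeq {α : Type*} (G : DynGraph α) (l : List (Op α)) : DynGraph α :=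
  l.foldl applyOp G

/-- The restriction `G|U` of a graph to a set `U` of nodes: the nodes of `G` in `U`,
and the edges of `G` with both endpoints in `U`. -/
def DynGraph.restrict {α : Type*} (G : DynGraph α) (U : Set α) : DynGraph α :=
  ⟨G.V ∩ U, {e ∈ G.E | ∀ v ∈ e, v ∈ U}⟩

/-- An operation concerns `U` when the node it acts on lies in `U`
(for node operations), resp. both endpoints of its edge lie in `U` (for edge operations). -/
def concerns {α : Type*} (U : Set α) : Op α → Prop
  | Op.addNode v => v ∈ U
  | Op.remNode v => v ∈ U
  | Op.addEdge e => ∀ v ∈ e, v ∈ U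
  | Op.remEdge e => ∀ v ∈ e, v ∈ U

open Classical in
/-- The `U`-filtered subsequence `σ|U`: the subsequence of operations concerning `U`. -/
noncomputable def filterSeq {α : Type*} (U : Set α) : List (Op α) → List (Op α)
  | [] => []
  | op :: rest => if concerns U op then op :: filterSeq U rest else filterSeq U rest

namespace DynGraph

variable {α : Type*} {U : Set α}

theorem restrict_applyOp_of_concerns (G : DynGraph α) {op : Op α} (h : concerns U op) :
    (applyOp G op).restrict U = applyOp (G.restrict U) op := by
  cases op with
  | addNode v =>
    simp only [applyOp, restrict, mk.injEq, and_true]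
    rw [Set.union_inter_distrib_right, Set.singleton_inter_of_mem h]
  | remNode v =>
    simp only [applyOp, restrict, mk.injEq, Set.inter_sdiff_right_comm, true_and]
    ext e
    simp only [Set.mem_ofPred_eq]
    tauto
  | addEdge e =>
    simp only [applyOp, restrict, mk.injEq, true_and]
    ext f
    simp only [Set.mem_ofPred_eq, Set.mem_union, Set.mem_singleton_iff]
    constructor
    · rintro ⟨hf | rfl, hU⟩ <;> tauto
    · rintro (hf | rfl) <;> tauto
  | remEdge e =>
    simp only [applyOp, restrict, mk.injEq, true_and]
    ext f
    simp only [Set.mem_ofPred_eq, Set.mem_sdiff]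
    tauto

theorem restrict_applyOp_of_not_concerns (G : DynGraph α) {op : Op α} (h : ¬concerns U op) :
    (applyOp G op).restrict U = G.restrict U := by
  cases op with
  | addNode v =>
    simp only [applyOp, restrict, mk.injEq, and_true]
    rw [Set.union_inter_distrib_right, Set.singleton_inter_eq_empty.mpr h, Set.union_empty]
  | remNode v =>
    simp only [applyOp, restrict, mk.injEq]
    constructor
    · ext x
      simp only [Set.mem_inter_iff, Set.mem_sdiff, Set.mem_singleton_iff]
      exact ⟨fun ⟨⟨hx, _⟩, hU⟩ => ⟨hx, hU⟩, fun ⟨hx, hU⟩ => ⟨⟨hx, by rintro rfl; exact h hU⟩, hU⟩⟩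
    · ext e
      simp only [Set.mem_ofPred_eq, and_congr_left_iff, and_iff_left_iff_imp]
      exact fun hU _ hv => h (hU v hv)
  | addEdge e =>
    simp only [applyOp, restrict, mk.injEq, true_and]
    ext f
    simp only [Set.mem_ofPred_eq, Set.mem_union, Set.mem_singleton_iff]
    constructor
    · rintro ⟨hf | rfl, hU⟩
      exacts [⟨hf, hU⟩, absurd hU h]
    · exact fun ⟨hf, hU⟩ => ⟨Or.inl hf, hU⟩
  | remEdge e =>
    simp only [applyOp, restrict, mk.injEq, true_and]
    ext f
    simp only [Set.mem_ofPred_eq, Set.mem_sdiff, Set.mem_singleton_iff]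
    constructor
    · exact fun ⟨⟨hf, _⟩, hU⟩ => ⟨hf, hU⟩
    · rintro ⟨hf, hU⟩
      exact ⟨⟨hf, by rintro rfl; exact h hU⟩, hU⟩

end DynGraph

open Classical in
theorem filterSeq_cons {α : Type*} (U : Set α) (op : Op α) (σ : List (Op α)) :
    filterSeq U (op :: σ) = if concerns U op then op :: filterSeq U σ else filterSeq U σ :=
  rfl

theorem applySeq_cons {α : Type*} (G : DynGraph α) (op : Op α) (σ : List (Op α)) :
    applySeq G (op :: σ) = applySeq (applyOp G op) σ :=
  rfl

/-- Partial reconstruction is correct: `(apply σ G)|U = apply (σ|U) (G|U)`. -/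
theorem partial_reconstruction {α : Type*} (U : Set α) (G : DynGraph α)
    (σ : List (Op α)) :
    (applySeq G σ).restrict U = applySeq (G.restrict U) (filterSeq U σ) := by
  induction σ generalizing G with
  | nil => rfl
  | cons op σ ih =>
    rw [applySeq_cons, ih, filterSeq_cons]
    split_ifs with h
    · rw [G.restrict_applyOp_of_concerns h, applySeq_cons]
    · rw [G.restrict_applyOp_of_not_concerns h]
end
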